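/- Let A be an associative unital ℂ-algebra with elements x, θ, h satisfying x h = h x, θ h = q j h θ where j = e^{2πi/3}, and such that θ' := θ + (h/(q-1)) x satisfies θ'³ = 0, x θ' = q θ' x, and h³ = 0. Then θ³ = 0. -/

import Mathlib

/-!
Put `b := (q - 1)⁻¹ • (h * x)`, so that `θ' = θ + b`. The relations make `b` skew-commute with `θ`
up to a multiple of `b ^ 2`, namely `b * θ = j ^ 2 • (θ * b) + (q - 1) • b ^ 2`, and `b ^ 3 = 0`
because `h` commutes with `x`. For such a pair the terms of `(θ + b) ^ 3` other than `θ ^ 3` add up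
to multiples of `1 + j ^ 2 + j ^ 4 = 0`, hence `θ ^ 3 = (θ + b) ^ 3 = θ' ^ 3 = 0`.
-/

section SkewCommute

variable {R A : Type*} [CommRing R] [Ring A] [Algebra R A]

theorem add_pow_three_eq_pow_three_of_mul_eq_smul_add {a b : A} {ω e : R}
    (hω : 1 + ω + ω ^ 2 = 0) (hba : b * a = ω • (a * b) + e • b ^ 2) (hb : b ^ 3 = 0) :
    (a + b) ^ 3 = a ^ 3 := by
  have hb3 : b * (b * b) = 0 := by rw [← mul_assoc, ← pow_two, ← pow_succ, hb]
  have hba' : ∀ t : A, b * (a * t) = ω • (a * (b * t)) + e • (b * (b * t)) := fun t => by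
    rw [← mul_assoc, hba, add_mul, smul_mul_assoc, smul_mul_assoc, pow_two, mul_assoc, mul_assoc]
  rw [pow_two] at hba
  simp only [pow_succ, pow_zero, one_mul, add_mul, mul_add, mul_assoc, hba, hba', hb3,
    smul_add, smul_mul_assoc, mul_smul_comm, smul_smul, smul_zero, add_zero]
  match_scalars
  · rfl
  · linear_combination hω
  · linear_combination (e + 1) * hω

theorem smul_mul_mul_eq_of_mul_add_smul_mul_eq {x θ h : A} {q ω c : R} (hω : ω ^ 3 = 1)
    (hxh : Commute x h) (hθh : θ * h = (q * ω) • (h * θ))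
    (hxθ' : x * (θ + c • (h * x)) = q • ((θ + c • (h * x)) * x)) :
    c • (h * x) * θ = ω ^ 2 • (θ * (c • (h * x))) + (q - 1) • (c • (h * x)) ^ 2 := by
  have hxθ : x * θ = q • (θ * x) + ((q - 1) * c) • (h * (x * x)) := by
    rw [mul_add, add_mul, mul_smul_comm, ← mul_assoc, hxh.eq, mul_assoc, smul_add, smul_mul_assoc,
      mul_assoc, smul_smul] at hxθ'
    rw [sub_mul, sub_smul, one_mul, ← add_sub_assoc, ← hxθ', add_sub_cancel_right]
  have hθhx : θ * (h * x) = (q * ω) • (h * (θ * x)) := by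
    rw [← mul_assoc, hθh, smul_mul_assoc, mul_assoc]
  rw [smul_mul_assoc, mul_assoc, hxθ, mul_smul_comm, hθhx, smul_pow, pow_two (h * x),
    mul_assoc, ← mul_assoc x, hxh.eq]
  simp only [mul_add, mul_smul_comm, smul_add, smul_smul, mul_assoc]
  match_scalars
  · linear_combination -(c * q) * hω
  · ring

end SkewCommute

theorem theta_cubed_zero_general
    (A : Type*) [Ring A] [Algebra ℂ A]
    (x θ h : A) (q j : ℂ)
    (hj : j = Complex.exp (2 * ↑Real.pi * Complex.I / 3))
    (hxh : x * h = h * x)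
    (hθh : θ * h = (q * j) • (h * θ))
    (θ' : A) (hθ' : θ' = θ + (q - 1)⁻¹ • (h * x))
    (hθ'3 : θ' ^ 3 = 0)
    (hxθ' : x * θ' = q • (θ' * x))
    (hh3 : h ^ 3 = 0) :
    θ ^ 3 = 0 := by
  have hj3 : IsPrimitiveRoot j 3 := by
    simpa [hj] using Complex.isPrimitiveRoot_exp 3 (by norm_num)
  have hj2 : 1 + j ^ 2 + (j ^ 2) ^ 2 = 0 := by
    simpa [Finset.sum_range_succ] using
      (hj3.pow_of_coprime 2 (by norm_num)).geom_sum_eq_zero (by norm_num)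
  have hskew := smul_mul_mul_eq_of_mul_add_smul_mul_eq hj3.pow_eq_one hxh hθh (hθ' ▸ hxθ')
  have hb : ((q - 1)⁻¹ • (h * x)) ^ 3 = 0 := by
    rw [smul_pow, (Commute.symm hxh).mul_pow, hh3, zero_mul, smul_zero]
  rw [← add_pow_three_eq_pow_three_of_mul_eq_smul_add hj2 hskew hb, ← hθ', hθ'3]

theorem theta_cubed_zero
    (A : Type*) [Ring A] [Algebra ℂ A]
    (x θ h : A) (q j : ℂ)
    (hj : j = Complex.exp (2 * ↑Real.pi * Complex.I / 3))
    (hq : q ≠ 1)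
    (hxh : x * h = h * x)
    (hθh : θ * h = (q * j) • (h * θ))
    (θ' : A) (hθ' : θ' = θ + (q - 1)⁻¹ • (h * x))
    (hθ'3 : θ' ^ 3 = 0)
    (hxθ' : x * θ' = q • (θ' * x))
    (hh3 : h ^ 3 = 0) :
    θ ^ 3 = 0 :=
  theta_cubed_zero_general A x θ h q j hj hxh hθh θ' hθ' hθ'3 hxθ' hh3
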